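/- arXiv:2501.18410 — 4 statements merged into one kernel-verified Lean document; each statement's English description precedes it below -/
import Mathlib

section
/- Let F be a field of characteristic 0 and let A be an F-vector space with a bilinear multiplication ⋆ and an F-linear map D : A → A that is a derivation of ⋆ (D(a⋆b) = D(a)⋆b + a⋆D(b)). Suppose that for all a,b,c ∈ A the identities a⋆(b⋆c) − (c⋆b)⋆a − 2(b·c)·D(a) + 4(a·b)·D(c) = 0 and (a⋆b)⋆c − a⋆(b⋆c) − (1/2)(a⋆c)⋆b + (1/2)(c⋆a)⋆b − 2(a·b)·D(c) = 0 hold, where a·b = (1/2)(a⋆b + b⋆a). Then, setting [a,b] = (1/2)(a⋆b − b⋆a), the polarization (A,·,[,],D) is both a generalized Poisson algebra and a transposed Poisson algebra: · is commutative and associative, [,] is antisymmetric satisfying the Jacobi identity, D is a derivation of both · and [,], and both [a·b,c] = a·[b,c] + [a,c]·b + a·b·D(c) and 2 a·[b,c] = [a·b,c] + [b,a·c] hold for all a,b,c ∈ A. -/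
/-!
All eight identities are linear in the structure constants of `⋆`. Commutativity, antisymmetry
and the two derivation rules hold for the polarization of any product with a derivation; each of
the remaining four is a fixed rational linear combination of the two defining identities, taken
at permutations of `(a, b, c)`.
-/

namespace LinearMap

variable {F A : Type*} [Field F] [AddCommGroup A] [Module F A] (star : A →ₗ[F] A →ₗ[F] A)

def polarMul (a b : A) : A := (2 : F)⁻¹ • (star a b + star b a)

def polarBracket (a b : A) : A := (2 : F)⁻¹ • (star a b - star b a)

def PolarIdentityOne (D : A →ₗ[F] A) : Prop :=
  ∀ a b c : A, star a (star b c) - star (star c b) a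
    - (2 : F) • polarMul star (polarMul star b c) (D a)
    + (4 : F) • polarMul star (polarMul star a b) (D c) = 0

def PolarIdentityTwo (D : A →ₗ[F] A) : Prop :=
  ∀ a b c : A, star (star a b) c - star a (star b c)
    - (2 : F)⁻¹ • star (star a c) b + (2 : F)⁻¹ • star (star c a) b
    - (2 : F) • polarMul star (polarMul star a b) (D c) = 0

theorem polarMul_comm (a b : A) : polarMul star a b = polarMul star b a := by
  rw [polarMul, polarMul, add_comm]

theorem polarBracket_antisymm (a b : A) : polarBracket star a b = -polarBracket star b a := by
  rw [polarBracket, polarBracket, ← smul_neg, neg_sub]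

section Derivation

variable {star} {D : A →ₗ[F] A}

theorem map_polarMul_of_derivation
    (hD : ∀ a b : A, D (star a b) = star (D a) b + star a (D b)) (a b : A) :
    D (polarMul star a b) = polarMul star (D a) b + polarMul star a (D b) := by
  simp only [polarMul, map_smul, map_add, hD]
  module

theorem map_polarBracket_of_derivation
    (hD : ∀ a b : A, D (star a b) = star (D a) b + star a (D b)) (a b : A) :
    D (polarBracket star a b) = polarBracket star (D a) b + polarBracket star a (D b) := by
  simp only [polarBracket, map_smul, map_sub, hD]
  module

end Derivation

/- The coefficients below solve the linear system expressing each target identity through the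
twelve instances of the two defining identities at the permutations of `(a, b, c)`. -/
section PolarIdentities

variable [CharZero F] {star} {D : A →ₗ[F] A}

theorem polarMul_assoc (h₁ : PolarIdentityOne star D) (h₂ : PolarIdentityTwo star D)
    (a b c : A) : polarMul star (polarMul star a b) c = polarMul star a (polarMul star b c) := by
  simp only [PolarIdentityOne, PolarIdentityTwo, polarMul, map_add, map_smul, add_apply,
    smul_apply, smul_add] at h₁ h₂ ⊢
  linear_combination (norm := module) (5/12 : F) • h₁ a b c + (2/3 : F) • h₂ a b c
    + (1/12 : F) • h₁ a c b + (1/3 : F) • h₂ a c b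
    + (1/3 : F) • h₁ b a c + (1/3 : F) • h₂ b a c
    + (1/4 : F) • h₁ c a b + (1/4 : F) • h₁ c b a

theorem polarBracket_jacobi (h₁ : PolarIdentityOne star D) (h₂ : PolarIdentityTwo star D)
    (a b c : A) :
    polarBracket star (polarBracket star a b) c + polarBracket star (polarBracket star b c) a
      + polarBracket star (polarBracket star c a) b = 0 := by
  simp only [PolarIdentityOne, PolarIdentityTwo, polarMul, polarBracket, map_add, map_sub,
    map_smul, add_apply, sub_apply, smul_apply, smul_add, smul_sub] at h₁ h₂ ⊢
  linear_combination (norm := module) (1/12 : F) • h₁ a b c + (1/3 : F) • h₂ a b c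
    + (-1/12 : F) • h₁ a c b + (-1/3 : F) • h₂ a c b
    + (-1/12 : F) • h₁ b a c + (-1/3 : F) • h₂ b a c
    + (-1/4 : F) • h₁ b c a + (-1/4 : F) • h₁ c a b + (1/4 : F) • h₁ c b a

theorem polarBracket_polarMul_left (h₁ : PolarIdentityOne star D) (a b c : A) :
    polarBracket star (polarMul star a b) c =
      polarMul star a (polarBracket star b c) + polarMul star (polarBracket star a c) b
        + polarMul star (polarMul star a b) (D c) := by
  simp only [PolarIdentityOne, polarMul, polarBracket, map_add, map_sub, map_smul, add_apply,
    sub_apply, smul_apply, smul_add, smul_sub] at h₁ ⊢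
  linear_combination (norm := module) (-1/4 : F) • h₁ a b c + (1/4 : F) • h₁ a c b
    + (-1/4 : F) • h₁ b a c + (1/4 : F) • h₁ b c a
    + (-1/4 : F) • h₁ c a b + (-1/4 : F) • h₁ c b a

theorem two_smul_polarMul_polarBracket (h₁ : PolarIdentityOne star D) (a b c : A) :
    (2 : F) • polarMul star a (polarBracket star b c) =
      polarBracket star (polarMul star a b) c + polarBracket star b (polarMul star a c) := by
  simp only [PolarIdentityOne, polarMul, polarBracket, map_add, map_sub, map_smul, add_apply,
    sub_apply, smul_apply, smul_add, smul_sub] at h₁ ⊢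
  linear_combination (norm := module) (1/2 : F) • h₁ a b c + (-1/2 : F) • h₁ a c b
    + (-1/4 : F) • h₁ b a c + (-1/4 : F) • h₁ b c a
    + (1/4 : F) • h₁ c a b + (1/4 : F) • h₁ c b a

end PolarIdentities

end LinearMap

open LinearMap in
theorem stmt_9 (F : Type*) [Field F] [CharZero F]
    (A : Type*) [AddCommGroup A] [Module F A]
    (star : A →ₗ[F] A →ₗ[F] A) (D : A →ₗ[F] A)
    (hDstar : ∀ a b : A, D (star a b) = star (D a) b + star a (D b))
    (cdot lb : A → A → A)
    (hcdot : ∀ a b : A, cdot a b = (2 : F)⁻¹ • (star a b + star b a))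
    (hlb : ∀ a b : A, lb a b = (2 : F)⁻¹ • (star a b - star b a))
    (hid1 : ∀ a b c : A, star a (star b c) - star (star c b) a
      - (2 : F) • cdot (cdot b c) (D a) + (4 : F) • cdot (cdot a b) (D c) = 0)
    (hid2 : ∀ a b c : A, star (star a b) c - star a (star b c)
      - (2 : F)⁻¹ • star (star a c) b + (2 : F)⁻¹ • star (star c a) b
      - (2 : F) • cdot (cdot a b) (D c) = 0)
    :
    (∀ a b : A, cdot a b = cdot b a) ∧
    (∀ a b c : A, cdot (cdot a b) c = cdot a (cdot b c)) ∧
    (∀ a b : A, lb a b = - lb b a) ∧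
    (∀ a b c : A, lb (lb a b) c + lb (lb b c) a + lb (lb c a) b = 0) ∧
    (∀ a b : A, D (cdot a b) = cdot (D a) b + cdot a (D b)) ∧
    (∀ a b : A, D (lb a b) = lb (D a) b + lb a (D b)) ∧
    (∀ a b c : A, lb (cdot a b) c =
      cdot a (lb b c) + cdot (lb a c) b + cdot (cdot a b) (D c)) ∧
    (∀ a b c : A, (2 : F) • cdot a (lb b c) = lb (cdot a b) c + lb b (cdot a c)) := by
  obtain rfl : cdot = polarMul star := funext₂ hcdot
  obtain rfl : lb = polarBracket star := funext₂ hlb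
  exact ⟨polarMul_comm star, polarMul_assoc hid1 hid2, polarBracket_antisymm star,
    polarBracket_jacobi hid1 hid2, map_polarMul_of_derivation hDstar,
    map_polarBracket_of_derivation hDstar, polarBracket_polarMul_left hid1,
    two_smul_polarMul_polarBracket hid1⟩
end

section
/- Let F be a field of characteristic 0 and let (A,·,[,],D) be both a generalized Poisson algebra and a transposed Poisson algebra over F: · is commutative and associative, [,] is a Lie bracket, D is an F-linear derivation of both products, and both [a·b,c] = a·[b,c] + [a,c]·b + a·b·D(c) and 2 a·[b,c] = [a·b,c] + [b,a·c] hold for all a,b,c. Define a ⋆ b = a·b + [a,b]. Then for all a,b,c ∈ A the identities a⋆(b⋆c) − (c⋆b)⋆a − 2(b·c)·D(a) + 4(a·b)·D(c) = 0 and (a⋆b)⋆c − a⋆(b⋆c) − (1/2)(a⋆c)⋆b + (1/2)(c⋆a)⋆b − 2(a·b)·D(c) = 0 hold. -/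
/-!
The transposed Poisson identity alone forces `a[b,c] + b[c,a] + c[a,b] = 0`, and combined with the
generalized Leibniz rule it expresses every mixed term through `D`:
`a[b,c] = (ac)D(b) - (ab)D(c)` and `[ab,c] = (ac)D(b) + (bc)D(a) - (ab)D(c)`.
Hence both nestings of `a ⋆ b = ab + [a,b]` reduce to an associative product, a double bracket and
terms `(xy)D(z)`; the two identities then follow from commutativity and associativity of the
product, and antisymmetry and the Jacobi identity of the bracket.
-/

section GeneralizedTransposedPoisson

variable {F A : Type*} [Field F] [AddCommGroup A] [Module F A]

def TransposedLeibniz (mul br : A →ₗ[F] A →ₗ[F] A) : Prop :=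
  ∀ a b c : A, (2 : F) • mul a (br b c) = br (mul a b) c + br b (mul a c)

def GeneralizedLeibniz (mul br : A →ₗ[F] A →ₗ[F] A) (D : A →ₗ[F] A) : Prop :=
  ∀ a b c : A, br (mul a b) c = mul a (br b c) + mul (br a c) b + mul (mul a b) (D c)

def depol (mul br : A →ₗ[F] A →ₗ[F] A) (a b : A) : A := mul a b + br a b

variable {mul br : A →ₗ[F] A →ₗ[F] A} {D : A →ₗ[F] A}

theorem mul_br_add_mul_br_add_mul_br_eq_zero [NeZero (2 : F)]
    (hcomm : ∀ a b : A, mul a b = mul b a) (hanti : ∀ a b : A, br a b = -br b a)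
    (hTP : TransposedLeibniz mul br) (a b c : A) :
    mul a (br b c) + mul b (br c a) + mul c (br a b) = 0 := by
  refine (smul_eq_zero.mp ?_).resolve_left (two_ne_zero (α := F))
  -- summing the three cyclic instances, the right-hand sides cancel in antisymmetric pairs
  have hab : br (mul a b) c = -br c (mul b a) := by rw [hcomm a b]; exact hanti _ _
  have hca : br (mul c a) b = -br b (mul a c) := by rw [hcomm c a]; exact hanti _ _
  have hbc : br (mul b c) a = -br a (mul c b) := by rw [hcomm b c]; exact hanti _ _
  linear_combination (norm := module) hTP a b c + hTP b c a + hTP c a b + hab + hca + hbc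

theorem mul_br_eq [NeZero (2 : F)]
    (hcomm : ∀ a b : A, mul a b = mul b a) (hanti : ∀ a b : A, br a b = -br b a)
    (hTP : TransposedLeibniz mul br) (hGP : GeneralizedLeibniz mul br D) (a b c : A) :
    mul a (br b c) = mul (mul a c) (D b) - mul (mul a b) (D c) := by
  -- expanding both brackets of the transposed identity by `hGP` leaves
  -- `b[c,a] + c[a,b] = (ab)D(c) - (ac)D(b)`
  have hb : br b (mul a c) = -(mul a (br c b) + mul (br a b) c + mul (mul a c) (D b)) := by
    rw [hanti, hGP]
  have hcb : mul a (br c b) = -mul a (br b c) := by rw [hanti c b, map_neg]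
  have hac : mul (br a c) b = -mul b (br c a) := by
    rw [hanti a c, LinearMap.map_neg₂, hcomm]
  linear_combination (norm := module) mul_br_add_mul_br_add_mul_br_eq_zero hcomm hanti hTP a b c
    - hTP a b c - hGP a b c - hb + hcb - hac + hcomm (br a b) c

theorem br_mul_eq [NeZero (2 : F)]
    (hcomm : ∀ a b : A, mul a b = mul b a) (hanti : ∀ a b : A, br a b = -br b a)
    (hTP : TransposedLeibniz mul br) (hGP : GeneralizedLeibniz mul br D) (a b c : A) :
    br (mul a b) c = mul (mul a c) (D b) + mul (mul b c) (D a) - mul (mul a b) (D c) := by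
  rw [hGP, hcomm (br a c), mul_br_eq hcomm hanti hTP hGP, mul_br_eq hcomm hanti hTP hGP,
    hcomm b a]
  abel

theorem depol_depol_left [NeZero (2 : F)]
    (hcomm : ∀ a b : A, mul a b = mul b a) (hanti : ∀ a b : A, br a b = -br b a)
    (hTP : TransposedLeibniz mul br) (hGP : GeneralizedLeibniz mul br D) (a b c : A) :
    depol mul br (depol mul br a b) c = mul (mul a b) c + (2 : F) • mul (mul b c) (D a)
      - mul (mul a b) (D c) + br (br a b) c := by
  simp only [depol, map_add, LinearMap.add_apply]
  rw [hcomm (br a b), mul_br_eq hcomm hanti hTP hGP, br_mul_eq hcomm hanti hTP hGP, hcomm c a,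
    hcomm c b]
  module

theorem depol_depol_right [NeZero (2 : F)]
    (hcomm : ∀ a b : A, mul a b = mul b a) (hanti : ∀ a b : A, br a b = -br b a)
    (hTP : TransposedLeibniz mul br) (hGP : GeneralizedLeibniz mul br D) (a b c : A) :
    depol mul br a (depol mul br b c) = mul a (mul b c) - (2 : F) • mul (mul a b) (D c)
      + mul (mul b c) (D a) + br a (br b c) := by
  simp only [depol, map_add]
  rw [mul_br_eq hcomm hanti hTP hGP, hanti a, br_mul_eq hcomm hanti hTP hGP, hcomm c a,
    hcomm b a]
  module

end GeneralizedTransposedPoisson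

theorem stmt_10_general (F : Type*) [Field F] [CharZero F]
    (A : Type*) [AddCommGroup A] [Module F A]
    (mul br : A →ₗ[F] A →ₗ[F] A) (D : A →ₗ[F] A)
    (hcomm : ∀ a b : A, mul a b = mul b a)
    (hassoc : ∀ a b c : A, mul (mul a b) c = mul a (mul b c))
    (hanti : ∀ a b : A, br a b = - br b a)
    (hjac : ∀ a b c : A, br (br a b) c + br (br b c) a + br (br c a) b = 0)
    (hGP : ∀ a b c : A, br (mul a b) c =
      mul a (br b c) + mul (br a c) b + mul (mul a b) (D c))
    (hTP : ∀ a b c : A, (2 : F) • mul a (br b c) = br (mul a b) c + br b (mul a c))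
    (star : A → A → A)
    (hstar : ∀ a b : A, star a b = mul a b + br a b) :
    (∀ a b c : A, star a (star b c) - star (star c b) a
      - (2 : F) • mul (mul b c) (D a) + (4 : F) • mul (mul a b) (D c) = 0) ∧
    (∀ a b c : A, star (star a b) c - star a (star b c)
      - (2 : F)⁻¹ • star (star a c) b + (2 : F)⁻¹ • star (star c a) b
      - (2 : F) • mul (mul a b) (D c) = 0) := by
  obtain rfl : star = depol mul br := funext₂ hstar
  simp only [depol_depol_left hcomm hanti hTP hGP, depol_depol_right hcomm hanti hTP hGP]
  refine ⟨fun a b c => ?_, fun a b c => ?_⟩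
  · rw [hanti c b, LinearMap.map_neg₂, hanti (br b c), hcomm c b, hcomm (mul b c) a, hcomm b a]
    module
  · rw [hanti a c, LinearMap.map_neg₂, hanti a (br b c), hcomm c b, hcomm c a, hassoc a b c]
    linear_combination (norm := module) hjac a b c

theorem stmt_10 (F : Type*) [Field F] [CharZero F]
    (A : Type*) [AddCommGroup A] [Module F A]
    (mul br : A →ₗ[F] A →ₗ[F] A) (D : A →ₗ[F] A)
    (hcomm : ∀ a b : A, mul a b = mul b a)
    (hassoc : ∀ a b c : A, mul (mul a b) c = mul a (mul b c))
    (hanti : ∀ a b : A, br a b = - br b a)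
    (hjac : ∀ a b c : A, br (br a b) c + br (br b c) a + br (br c a) b = 0)
    (hDmul : ∀ a b : A, D (mul a b) = mul (D a) b + mul a (D b))
    (hDbr : ∀ a b : A, D (br a b) = br (D a) b + br a (D b))
    (hGP : ∀ a b c : A, br (mul a b) c =
      mul a (br b c) + mul (br a c) b + mul (mul a b) (D c))
    (hTP : ∀ a b c : A, (2 : F) • mul a (br b c) = br (mul a b) c + br b (mul a c))
    (star : A → A → A)
    (hstar : ∀ a b : A, star a b = mul a b + br a b) :
    (∀ a b c : A, star a (star b c) - star (star c b) a
      - (2 : F) • mul (mul b c) (D a) + (4 : F) • mul (mul a b) (D c) = 0) ∧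
    (∀ a b c : A, star (star a b) c - star a (star b c)
      - (2 : F)⁻¹ • star (star a c) b + (2 : F)⁻¹ • star (star c a) b
      - (2 : F) • mul (mul a b) (D c) = 0) :=
  stmt_10_general F A mul br D hcomm hassoc hanti hjac hGP hTP star hstar
end

section
/- Let F be a field of characteristic 0 and let P be a generalized Poisson algebra over F: a commutative associative product ·, a Lie bracket [,], and an F-linear derivation D of both products satisfying [a·b,c] = a·[b,c] + [a,c]·b + a·b·D(c) for all a,b,c ∈ P. Let A and B be abelian subalgebras of P (x·y = 0 and [x,y] = 0 for all x,y in A, and likewise in B), and suppose P = A + B. Then for all c₁,c₂,c₃,c₄ ∈ P: c₁·c₂·[c₃,c₄] = 0, [c₁,c₂]·c₃·c₄ = 0, and [c₁·c₂, c₃·c₄] = 0. -/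
/-!
Write `xy` for `mul x y`. Since `P = A + B`, among any three elements written as sums of elements
of `A` and of `B`, two summands always lie in the same abelian subalgebra; by commutativity and
associativity of `mul` every product `xyz` of three elements therefore vanishes. All three identities
are then triple products: the first two directly, and `[c₁c₂, c₃c₄]` after expanding it with the
generalized Leibniz rule `[ab, c] = a[b, c] + [a, c]b + ab D(c)` twice.
-/

section TripleProduct

variable {R M : Type*} [CommSemiring R] [AddCommMonoid M] [Module R M]
  {mul : M →ₗ[R] M →ₗ[R] M} {A B : Set M}

theorem mul_mul_eq_zero_of_mem_of_mem (hcomm : ∀ a b : M, mul a b = mul b a)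
    (hassoc : ∀ a b c : M, mul (mul a b) c = mul a (mul b c))
    (hA : ∀ x ∈ A, ∀ y ∈ A, mul x y = 0) (hB : ∀ x ∈ B, ∀ y ∈ B, mul x y = 0)
    (hsum : ∀ p : M, ∃ a ∈ A, ∃ b ∈ B, p = a + b)
    {a b : M} (ha : a ∈ A) (hb : b ∈ B) (z : M) : mul (mul a b) z = 0 := by
  obtain ⟨a', ha', b', hb', rfl⟩ := hsum z
  have haa' : mul (mul a b) a' = 0 := by
    rw [hassoc, hcomm b, ← hassoc, hA a ha a' ha', LinearMap.map_zero₂]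
  have hbb' : mul (mul a b) b' = 0 := by
    rw [hassoc, hB b hb b' hb', map_zero]
  rw [map_add, haa', hbb', add_zero]

theorem mul_mul_eq_zero_of_forall_eq_add (hcomm : ∀ a b : M, mul a b = mul b a)
    (hassoc : ∀ a b c : M, mul (mul a b) c = mul a (mul b c))
    (hA : ∀ x ∈ A, ∀ y ∈ A, mul x y = 0) (hB : ∀ x ∈ B, ∀ y ∈ B, mul x y = 0)
    (hsum : ∀ p : M, ∃ a ∈ A, ∃ b ∈ B, p = a + b) (x y z : M) :
    mul (mul x y) z = 0 := by
  obtain ⟨a₁, ha₁, b₁, hb₁, rfl⟩ := hsum x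
  obtain ⟨a₂, ha₂, b₂, hb₂, rfl⟩ := hsum y
  have hxy : mul (a₁ + b₁) (a₂ + b₂) = mul a₁ b₂ + mul a₂ b₁ := by
    simp only [map_add, LinearMap.add_apply, hA a₁ ha₁ a₂ ha₂, hB b₁ hb₁ b₂ hb₂, hcomm b₁ a₂,
      zero_add, add_comm]
  rw [hxy, map_add, LinearMap.add_apply,
    mul_mul_eq_zero_of_mem_of_mem hcomm hassoc hA hB hsum ha₁ hb₂,
    mul_mul_eq_zero_of_mem_of_mem hcomm hassoc hA hB hsum ha₂ hb₁, add_zero]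

end TripleProduct

section GeneralizedPoisson

variable {R M : Type*} [CommSemiring R] [AddCommGroup M] [Module R M]
  {mul br : M →ₗ[R] M →ₗ[R] M} {D : M →ₗ[R] M}

theorem mul_br_mul_eq_zero
    (hGP : ∀ a b c : M, br (mul a b) c = mul a (br b c) + mul (br a c) b + mul (mul a b) (D c))
    (htriple : ∀ x y z : M, mul x (mul y z) = 0) (x y z w : M) :
    mul x (br (mul y z) w) = 0 := by
  rw [hGP, map_add, map_add, htriple, htriple, htriple, add_zero, add_zero]

theorem br_mul_mul_eq_zero (hcomm : ∀ a b : M, mul a b = mul b a)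
    (hanti : ∀ a b : M, br a b = - br b a)
    (hGP : ∀ a b c : M, br (mul a b) c = mul a (br b c) + mul (br a c) b + mul (mul a b) (D c))
    (htriple : ∀ x y z : M, mul x (mul y z) = 0) (a b c d : M) :
    br (mul a b) (mul c d) = 0 := by
  have hbr : ∀ x y : M, mul x (br y (mul c d)) = 0 := fun x y => by
    rw [hanti, map_neg, mul_br_mul_eq_zero hGP htriple, neg_zero]
  rw [hGP, hbr, hcomm (br a _), hbr, hcomm (mul a b), htriple, add_zero, add_zero]

end GeneralizedPoisson

theorem stmt_14_general (F : Type*) [Field F]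
    (P : Type*) [AddCommGroup P] [Module F P]
    (mul br : P →ₗ[F] P →ₗ[F] P) (D : P →ₗ[F] P)
    (hcomm : ∀ a b : P, mul a b = mul b a)
    (hassoc : ∀ a b c : P, mul (mul a b) c = mul a (mul b c))
    (hanti : ∀ a b : P, br a b = - br b a)
    (hGP : ∀ a b c : P, br (mul a b) c =
      mul a (br b c) + mul (br a c) b + mul (mul a b) (D c))
    (A B : Submodule F P)
    (hA : ∀ x ∈ A, ∀ y ∈ A, mul x y = 0 ∧ br x y = 0)
    (hB : ∀ x ∈ B, ∀ y ∈ B, mul x y = 0 ∧ br x y = 0)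
    (hsum : ∀ p : P, ∃ a ∈ A, ∃ b ∈ B, p = a + b)
    :
    ∀ c₁ c₂ c₃ c₄ : P,
      mul (mul c₁ c₂) (br c₃ c₄) = 0 ∧
      mul (mul (br c₁ c₂) c₃) c₄ = 0 ∧
      br (mul c₁ c₂) (mul c₃ c₄) = 0 := by
  have htriple : ∀ x y z : P, mul (mul x y) z = 0 :=
    mul_mul_eq_zero_of_forall_eq_add (A := A) (B := B) hcomm hassoc
      (fun x hx y hy => (hA x hx y hy).1) (fun x hx y hy => (hB x hx y hy).1) hsum
  have htriple' : ∀ x y z : P, mul x (mul y z) = 0 := fun x y z => by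
    rw [← hassoc, htriple]
  intro c₁ c₂ c₃ c₄
  exact ⟨htriple _ _ _, htriple _ _ _, br_mul_mul_eq_zero hcomm hanti hGP htriple' _ _ _ _⟩

theorem stmt_14 (F : Type*) [Field F] [CharZero F]
    (P : Type*) [AddCommGroup P] [Module F P]
    (mul br : P →ₗ[F] P →ₗ[F] P) (D : P →ₗ[F] P)
    (hcomm : ∀ a b : P, mul a b = mul b a)
    (hassoc : ∀ a b c : P, mul (mul a b) c = mul a (mul b c))
    (hanti : ∀ a b : P, br a b = - br b a)
    (hjac : ∀ a b c : P, br (br a b) c + br (br b c) a + br (br c a) b = 0)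
    (hDmul : ∀ a b : P, D (mul a b) = mul (D a) b + mul a (D b))
    (hDbr : ∀ a b : P, D (br a b) = br (D a) b + br a (D b))
    (hGP : ∀ a b c : P, br (mul a b) c =
      mul a (br b c) + mul (br a c) b + mul (mul a b) (D c))
    (A B : Submodule F P)
    (hA : ∀ x ∈ A, ∀ y ∈ A, mul x y = 0 ∧ br x y = 0)
    (hB : ∀ x ∈ B, ∀ y ∈ B, mul x y = 0 ∧ br x y = 0)
    (hsum : ∀ p : P, ∃ a ∈ A, ∃ b ∈ B, p = a + b)
    :
    ∀ c₁ c₂ c₃ c₄ : P,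
      mul (mul c₁ c₂) (br c₃ c₄) = 0 ∧
      mul (mul (br c₁ c₂) c₃) c₄ = 0 ∧
      br (mul c₁ c₂) (mul c₃ c₄) = 0 :=
  stmt_14_general F P mul br D hcomm hassoc hanti hGP A B hA hB hsum
end

section
/- Let F be a field of characteristic 0 and let (A,·,[,],D) be both a generalized Poisson algebra and a transposed Poisson algebra over F: · is commutative and associative, [,] is a Lie bracket, D is an F-linear derivation of both products, and both [a·b,c] = a·[b,c] + [a,c]·b + a·b·D(c) and 2 a·[b,c] = [a·b,c] + [b,a·c] hold for all a,b,c ∈ A. Then the single multiplication a ⋆ b = a·b + [a,b] satisfies the identity 3((a⋆b)⋆c − a⋆(b⋆c)) = (a⋆c)⋆b + (b⋆c)⋆a − (b⋆a)⋆c − (c⋆a)⋆b + 4(a·b)·D(c) + 2D(a)·(b·c) for all a,b,c ∈ A. -/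
/-! With `⋆ = · + [,]`, the generalized Poisson identity turns every mixed term `[x·y, z]` into
products with a single bracket or with `D`. The associator of `⋆` then collapses, by
associativity, commutativity and the Jacobi identity, to `[[a,c],b] + (a·b)·D c + D a·(b·c)`,
and the four-term combination on the right-hand side collapses to
`3 [[a,c],b] + D a·(b·c) - (a·b)·D c`, so both sides of the claim equal
`3 ([[a,c],b] + (a·b)·D c + D a·(b·c))`. -/

namespace GeneralizedPoisson

variable {R A : Type*} [CommRing R] [AddCommGroup A] [Module R A]

def depolarization (mul br : A →ₗ[R] A →ₗ[R] A) (a b : A) : A :=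
  mul a b + br a b

theorem br_br_add_br_br (br : A →ₗ[R] A →ₗ[R] A)
    (hanti : ∀ a b : A, br a b = - br b a)
    (hjac : ∀ a b c : A, br (br a b) c + br (br b c) a + br (br c a) b = 0) (a b c : A) :
    br (br a b) c + br (br b c) a = br (br a c) b := by
  have h := hjac a b c
  rw [hanti c a, map_neg, LinearMap.neg_apply] at h
  exact eq_of_sub_eq_zero ((sub_eq_add_neg _ _).trans h)

theorem br_mul_right (mul br : A →ₗ[R] A →ₗ[R] A) (D : A →ₗ[R] A)
    (hanti : ∀ a b : A, br a b = - br b a)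
    (hGP : ∀ a b c : A, br (mul a b) c =
      mul a (br b c) + mul (br a c) b + mul (mul a b) (D c)) (x y z : A) :
    br x (mul y z) = mul y (br x z) + mul (br x y) z - mul (mul y z) (D x) := by
  rw [hanti, hGP, hanti z x, hanti y x, map_neg, map_neg, LinearMap.neg_apply]
  abel

theorem depolarization_depolarization (mul br : A →ₗ[R] A →ₗ[R] A) (D : A →ₗ[R] A)
    (hGP : ∀ a b c : A, br (mul a b) c =
      mul a (br b c) + mul (br a c) b + mul (mul a b) (D c)) (x y z : A) :
    depolarization mul br (depolarization mul br x y) z =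
      mul (mul x y) z + mul x (br y z) + mul (br x z) y + mul (br x y) z
        + mul (mul x y) (D z) + br (br x y) z := by
  simp only [depolarization, map_add, LinearMap.add_apply, hGP]
  abel

theorem depolarization_assoc (mul br : A →ₗ[R] A →ₗ[R] A) (D : A →ₗ[R] A)
    (hcomm : ∀ a b : A, mul a b = mul b a)
    (hassoc : ∀ a b c : A, mul (mul a b) c = mul a (mul b c))
    (hanti : ∀ a b : A, br a b = - br b a)
    (hjac : ∀ a b c : A, br (br a b) c + br (br b c) a + br (br c a) b = 0)
    (hGP : ∀ a b c : A, br (mul a b) c =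
      mul a (br b c) + mul (br a c) b + mul (mul a b) (D c)) (a b c : A) :
    depolarization mul br (depolarization mul br a b) c
        - depolarization mul br a (depolarization mul br b c) =
      br (br a c) b + mul (mul a b) (D c) + mul (D a) (mul b c) := by
  rw [depolarization_depolarization mul br D hGP]
  simp only [depolarization, map_add, br_mul_right mul br D hanti hGP, hassoc,
    hcomm (br a c) b, hcomm (D a), hanti a (br b c)]
  linear_combination (norm := abel) br_br_add_br_br br hanti hjac a b c

theorem depolarization_skew (mul br : A →ₗ[R] A →ₗ[R] A) (D : A →ₗ[R] A)
    (hcomm : ∀ a b : A, mul a b = mul b a)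
    (hassoc : ∀ a b c : A, mul (mul a b) c = mul a (mul b c))
    (hanti : ∀ a b : A, br a b = - br b a)
    (hjac : ∀ a b c : A, br (br a b) c + br (br b c) a + br (br c a) b = 0)
    (hGP : ∀ a b c : A, br (mul a b) c =
      mul a (br b c) + mul (br a c) b + mul (mul a b) (D c)) (a b c : A) :
    depolarization mul br (depolarization mul br a c) b
        + depolarization mul br (depolarization mul br b c) a
        - depolarization mul br (depolarization mul br b a) c
        - depolarization mul br (depolarization mul br c a) b =
      (3 : R) • br (br a c) b + mul (D a) (mul b c) - mul (mul a b) (D c) := by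
  have hlc : ∀ x y z : A, mul x (mul y z) = mul y (mul x z) := fun x y z => by
    rw [← hassoc, hcomm x y, hassoc]
  simp only [depolarization_depolarization mul br D hGP, hanti b a, hanti c a, hanti c b,
    map_neg, LinearMap.neg_apply, hcomm, hlc]
  linear_combination (norm := module) br_br_add_br_br br hanti hjac a b c

end GeneralizedPoisson

theorem stmt_19_general (F : Type*) [Field F]
    (A : Type*) [AddCommGroup A] [Module F A]
    (mul br : A →ₗ[F] A →ₗ[F] A) (D : A →ₗ[F] A)
    (hcomm : ∀ a b : A, mul a b = mul b a)
    (hassoc : ∀ a b c : A, mul (mul a b) c = mul a (mul b c))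
    (hanti : ∀ a b : A, br a b = - br b a)
    (hjac : ∀ a b c : A, br (br a b) c + br (br b c) a + br (br c a) b = 0)
    (hGP : ∀ a b c : A, br (mul a b) c =
      mul a (br b c) + mul (br a c) b + mul (mul a b) (D c))
    (star : A → A → A)
    (hstar : ∀ a b : A, star a b = mul a b + br a b) :
    ∀ a b c : A, (3 : F) • (star (star a b) c - star a (star b c)) =
      star (star a c) b + star (star b c) a - star (star b a) c - star (star c a) b
      + (4 : F) • mul (mul a b) (D c) + (2 : F) • mul (D a) (mul b c) := by
  obtain rfl : star = GeneralizedPoisson.depolarization mul br := funext₂ hstar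
  intro a b c
  rw [GeneralizedPoisson.depolarization_assoc mul br D hcomm hassoc hanti hjac hGP,
    GeneralizedPoisson.depolarization_skew mul br D hcomm hassoc hanti hjac hGP]
  module

theorem stmt_19 (F : Type*) [Field F] [CharZero F]
    (A : Type*) [AddCommGroup A] [Module F A]
    (mul br : A →ₗ[F] A →ₗ[F] A) (D : A →ₗ[F] A)
    (hcomm : ∀ a b : A, mul a b = mul b a)
    (hassoc : ∀ a b c : A, mul (mul a b) c = mul a (mul b c))
    (hanti : ∀ a b : A, br a b = - br b a)
    (hjac : ∀ a b c : A, br (br a b) c + br (br b c) a + br (br c a) b = 0)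
    (hDmul : ∀ a b : A, D (mul a b) = mul (D a) b + mul a (D b))
    (hDbr : ∀ a b : A, D (br a b) = br (D a) b + br a (D b))
    (hGP : ∀ a b c : A, br (mul a b) c =
      mul a (br b c) + mul (br a c) b + mul (mul a b) (D c))
    (hTP : ∀ a b c : A, (2 : F) • mul a (br b c) = br (mul a b) c + br b (mul a c))
    (star : A → A → A)
    (hstar : ∀ a b : A, star a b = mul a b + br a b) :
    ∀ a b c : A, (3 : F) • (star (star a b) c - star a (star b c)) =
      star (star a c) b + star (star b c) a - star (star b a) c - star (star c a) b
      + (4 : F) • mul (mul a b) (D c) + (2 : F) • mul (D a) (mul b c) :=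
  stmt_19_general F A mul br D hcomm hassoc hanti hjac hGP star hstar
end
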